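/- arXiv:2107.10007 — 4 statements merged into one kernel-verified Lean document; each statement's English description precedes it below -/
import Mathlib

section
/- Let V_0 = ℂ^m with a nondegenerate symmetric form and V_1 = ℂ^{2n} with a symplectic form, m ≤ 2n+1. Every skew-symmetric m × m matrix arises as A* A for some A ∈ Hom(V_0, V_1); i.e. the map q_0 : Hom(V_0, V_1) → so(V_0), A ↦ A* A, is surjective when m ≤ 2n+1. -/
/-!
A skew matrix `S` with a nonzero entry `c = S i j` is the sum of the elementary skew matrix
`c⁻¹ (Sᵢ ⊗ Sⱼ - Sⱼ ⊗ Sᵢ)` and a skew matrix whose rows `i` and `j` vanish (one step of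
symplectic Gram–Schmidt). Each step uses up two of the at most `2n + 1` nonzero rows, so after
at most `n` steps nothing is left, and `S = ∑ₖ (xₖ ⊗ yₖ - yₖ ⊗ xₖ)` with `n` pairs of vectors.
For the matrix `A` with rows `x₁, …, xₙ, y₁, …, yₙ` this sum is exactly `Aᵀ J A`.
-/

open Matrix

namespace Matrix

variable {R ι κ : Type*}

lemma fromRows_transpose_mul_fromBlocks_mul_fromRows [CommRing R] [Fintype ι] [Fintype κ]
    [DecidableEq κ] (X Y : Matrix κ ι R) :
    (fromRows X Y)ᵀ * (fromBlocks 0 1 (-1) 0 : Matrix (κ ⊕ κ) (κ ⊕ κ) R) * fromRows X Y =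
      Xᵀ * Y - Yᵀ * X := by
  rw [transpose_fromRows, fromCols_mul_fromBlocks, fromCols_mul_fromRows]
  simp [sub_eq_neg_add]

lemma transpose_of_cons_mul_of_cons [CommRing R] [Fintype ι] {n : ℕ} (a b : ι → R)
    (X Y : Matrix (Fin n) ι R) :
    (of (vecCons a X))ᵀ * of (vecCons b Y) = vecMulVec a b + Xᵀ * Y := by
  ext p q
  simp only [mul_apply, Fin.sum_univ_succ, transpose_apply, of_apply, add_apply, vecMulVec_apply]
  rfl

section Skew

variable [Field R] {S : Matrix ι ι R}

lemma apply_swap_of_transpose_eq_neg (hS : Sᵀ = -S) (i j : ι) : S j i = -S i j := by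
  simpa using congr_fun₂ hS i j

lemma apply_self_of_transpose_eq_neg [NeZero (2 : R)] (hS : Sᵀ = -S) (i : ι) : S i i = 0 := by
  have h : (2 : R) * S i i = 0 := by linear_combination apply_swap_of_transpose_eq_neg hS i i
  exact (mul_eq_zero.mp h).resolve_left two_ne_zero

def skewReduce (S : Matrix ι ι R) (i j : ι) : Matrix ι ι R :=
  S - (S i j)⁻¹ • (vecMulVec (S i) (S j) - vecMulVec (S j) (S i))

lemma skewReduce_apply (i j p q : ι) :
    skewReduce S i j p q = S p q - (S i j)⁻¹ * (S i p * S j q - S j p * S i q) := by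
  simp [skewReduce, vecMulVec_apply]

lemma transpose_skewReduce (hS : Sᵀ = -S) (i j : ι) :
    (skewReduce S i j)ᵀ = -skewReduce S i j := by
  simp only [skewReduce, transpose_sub, transpose_smul, transpose_vecMulVec, hS]
  module

lemma skewReduce_apply_of_row_eq_zero (hS : Sᵀ = -S) (i j : ι) {p : ι} (hp : S p = 0) (q : ι) :
    skewReduce S i j p q = 0 := by
  rw [skewReduce_apply, apply_swap_of_transpose_eq_neg hS p i,
    apply_swap_of_transpose_eq_neg hS p j]
  simp [hp]

variable [NeZero (2 : R)] (hS : Sᵀ = -S)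
include hS

lemma skewReduce_apply_left {i j : ι} (hij : S i j ≠ 0) (q : ι) : skewReduce S i j i q = 0 := by
  rw [skewReduce_apply, apply_self_of_transpose_eq_neg hS, apply_swap_of_transpose_eq_neg hS i j]
  field_simp
  ring

lemma skewReduce_apply_right {i j : ι} (hij : S i j ≠ 0) (q : ι) : skewReduce S i j j q = 0 := by
  rw [skewReduce_apply, apply_self_of_transpose_eq_neg hS]
  field_simp
  ring

lemma skewReduce_row_eq_zero_of_notMem [DecidableEq ι] {t : Finset ι}
    (ht : ∀ p ∉ t, S p = 0) {i j : ι} (hij : S i j ≠ 0) {p : ι}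
    (hp : p ∉ (t.erase i).erase j) : skewReduce S i j p = 0 := by
  ext q
  by_cases hpj : p = j
  · exact hpj ▸ skewReduce_apply_right hS hij q
  by_cases hpi : p = i
  · exact hpi ▸ skewReduce_apply_left hS hij q
  exact skewReduce_apply_of_row_eq_zero hS i j (ht p (by simp_all)) q

lemma exists_mem_apply_ne_zero {t : Finset ι} (ht : ∀ p ∉ t, S p = 0) (h0 : S ≠ 0) :
    ∃ i ∈ t, ∃ j ∈ t, i ≠ j ∧ S i j ≠ 0 := by
  obtain ⟨i, j, hij⟩ : ∃ i j, S i j ≠ 0 := by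
    by_contra! h
    exact h0 (ext h)
  refine ⟨i, ?_, j, ?_, fun h => hij (h ▸ apply_self_of_transpose_eq_neg hS i), hij⟩
  · by_contra hi
    simp [ht i hi] at hij
  · by_contra hj
    have h := apply_swap_of_transpose_eq_neg hS i j
    simp [ht j hj] at h
    exact hij h

lemma eq_zero_of_card_le_one {t : Finset ι} (ht : ∀ p ∉ t, S p = 0) (hcard : t.card ≤ 1) :
    S = 0 := by
  by_contra h0
  obtain ⟨i, hi, j, hj, hne, -⟩ := exists_mem_apply_ne_zero hS ht h0
  exact hne (Finset.card_le_one.mp hcard i hi j hj)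

lemma exists_eq_transpose_mul_sub_of_card_le [Fintype ι] [DecidableEq ι] (n : ℕ) (t : Finset ι)
    (hcard : t.card ≤ 2 * n + 1) (ht : ∀ p ∉ t, S p = 0) :
    ∃ X Y : Matrix (Fin n) ι R, S = Xᵀ * Y - Yᵀ * X := by
  induction n generalizing S t with
  | zero => exact ⟨0, 0, by simpa using eq_zero_of_card_le_one hS ht hcard⟩
  | succ n ih =>
    by_cases h0 : S = 0
    · exact ⟨0, 0, by simp [h0]⟩
    obtain ⟨i, hi, j, hj, hne, hij⟩ := exists_mem_apply_ne_zero hS ht h0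
    have hcard' : ((t.erase i).erase j).card ≤ 2 * n + 1 := by
      rw [Finset.card_erase_of_mem (Finset.mem_erase.mpr ⟨hne.symm, hj⟩),
        Finset.card_erase_of_mem hi]
      omega
    obtain ⟨X, Y, hXY⟩ := ih (transpose_skewReduce hS i j) _ hcard'
      fun p hp => skewReduce_row_eq_zero_of_notMem hS ht hij hp
    refine ⟨of (vecCons ((S i j)⁻¹ • S i) X), of (vecCons (S j) Y), ?_⟩
    rw [transpose_of_cons_mul_of_cons, transpose_of_cons_mul_of_cons, smul_vecMulVec,
      vecMulVec_smul]
    rw [skewReduce] at hXY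
    linear_combination (norm := module) hXY

end Skew

end Matrix

theorem stmt6 (m n : ℕ) (hmn : m ≤ 2 * n + 1)
    (S : Matrix (Fin m) (Fin m) ℂ) (hS : Sᵀ = -S) :
    ∃ A : Matrix (Fin n ⊕ Fin n) (Fin m) ℂ,
      Aᵀ * (Matrix.fromBlocks (0 : Matrix (Fin n) (Fin n) ℂ) 1 (-1) 0 : Matrix (Fin n ⊕ Fin n) (Fin n ⊕ Fin n) ℂ) * A = S := by
  obtain ⟨X, Y, hXY⟩ :=
    exists_eq_transpose_mul_sub_of_card_le hS n Finset.univ (by simpa using hmn) (by simp)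
  exact ⟨fromRows X Y, by rw [fromRows_transpose_mul_fromBlocks_mul_fromRows, hXY]⟩
end

section
/- Let m ≤ 2n+1. The map q_0 : Hom(V_0, V_1) → so(V_0), A ↦ A* A, induces an isomorphism of invariant rings ℂ[Hom(V_0,V_1)]^{SO(V_0) × Sp(V_1)} ≅ ℂ[so(V_0)]^{SO(V_0)}; equivalently, the pullback q_0^* : ℂ[so(V_0)] → ℂ[V_0 ⊗ V_1]^{Sp(V_1)} is surjective onto the Sp(V_1)-invariants. -/
/-!
For `m = 2n + 1` the Gram map `q₀ : A ↦ Aᵀ Ω A` from `2n × m` matrices onto alternating `m × m`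
matrices is surjective (an alternating matrix supported on at most `2n + 1` indices is a sum of
`n` wedges `u vᵀ - v uᵀ`), and two matrices with the same Gram matrix differ by a symplectic
matrix as soon as a `2n × 2n` principal minor of that Gram matrix is nonzero. Solving
`Aᵀ Ω A = Y` for the generic alternating matrix `Y` over the fraction field of `ℂ[so(V₀)]` and
evaluating an `Sp`-invariant `f` at that solution gives `f · q₀^*(s) = q₀^*(r)`: both sides agree
wherever the fibre of `q₀` is a single orbit, a dense set. Since `q₀` is surjective on points,
the Nullstellensatz shows that every prime factor of `s` divides `r`, so `f` lies in the image
of `q₀^*`. Smaller `m` reduce to `m = 2n + 1` by precomposing with a retraction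
`Fin (2n + 1) → Fin m`.
-/

open Matrix MvPolynomial

def symplecticForm (ι R : Type*) [DecidableEq ι] [CommRing R] : Matrix (ι ⊕ ι) (ι ⊕ ι) R :=
  fromBlocks 0 1 (-1) 0

lemma transpose_mul_mul_submatrix {ι κ μ ν ρ R : Type*} [Fintype ι] [CommRing R]
    (A : Matrix ι κ R) (M : Matrix ι ι R) (B : Matrix ι μ R) (e₁ : ν → κ) (e₂ : ρ → μ) :
    (Aᵀ * M * B).submatrix e₁ e₂ = (A.submatrix id e₁)ᵀ * M * B.submatrix id e₂ :=
  rfl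

section SymplecticForm
variable {ι κ μ R : Type*} [DecidableEq ι] [CommRing R]

lemma symplecticForm_eq_neg_J : symplecticForm ι R = -J ι R := by
  simp [symplecticForm, J, fromBlocks_neg]

@[simp] lemma symplecticForm_map {S : Type*} [CommRing S] (ψ : R →+* S) :
    (symplecticForm ι R).map ψ = symplecticForm ι S := by
  simp [symplecticForm_eq_neg_J, Matrix.map_neg]

variable [Fintype ι]

lemma symplecticForm_mul_self : symplecticForm ι R * symplecticForm ι R = -1 := by
  rw [symplecticForm_eq_neg_J, neg_mul_neg, J_squared]

lemma isUnit_det_symplecticForm : IsUnit (symplecticForm ι R).det :=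
  isUnit_det_of_right_inverse (B := -symplecticForm ι R) (by
    rw [Matrix.mul_neg, symplecticForm_mul_self, neg_neg])

lemma transpose_mul_symplecticForm_mul_apply (A : Matrix (ι ⊕ ι) κ R) (B : Matrix (ι ⊕ ι) μ R)
    (c : κ) (d : μ) :
    (Aᵀ * symplecticForm ι R * B) c d =
      ∑ i, (A (.inl i) c * B (.inr i) d - A (.inr i) c * B (.inl i) d) := by
  simp only [symplecticForm, Matrix.mul_apply, Fintype.sum_sum_type, fromBlocks_apply₁₁,
    fromBlocks_apply₁₂, fromBlocks_apply₂₁, fromBlocks_apply₂₂, transpose_apply]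
  simp [Matrix.one_apply, Finset.sum_sub_distrib]
  ring

lemma gram_map {S : Type*} [CommRing S] (ψ : R →+* S) (A : Matrix (ι ⊕ ι) κ R) :
    (Aᵀ * symplecticForm ι R * A).map ψ = (A.map ψ)ᵀ * symplecticForm ι S * A.map ψ := by
  simp [Matrix.map_mul, Matrix.transpose_map]

lemma gram_smul (c : R) (A : Matrix (ι ⊕ ι) κ R) :
    (c • A)ᵀ * symplecticForm ι R * (c • A) = c ^ 2 • (Aᵀ * symplecticForm ι R * A) := by
  rw [transpose_smul, Matrix.smul_mul, Matrix.mul_smul, Matrix.smul_mul, smul_smul, pow_two]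

lemma gram_apply_self (A : Matrix (ι ⊕ ι) κ R) (c : κ) :
    (Aᵀ * symplecticForm ι R * A) c c = 0 := by
  simp [transpose_mul_symplecticForm_mul_apply, mul_comm]

lemma gram_apply_swap (A : Matrix (ι ⊕ ι) κ R) (c d : κ) :
    (Aᵀ * symplecticForm ι R * A) d c = -(Aᵀ * symplecticForm ι R * A) c d := by
  simp only [transpose_mul_symplecticForm_mul_apply, ← Finset.sum_neg_distrib]
  exact Finset.sum_congr rfl fun _ _ => by ring

end SymplecticForm

section Alternating
variable {κ k : Type*} [Field k]

lemma exists_sum_wedge_of_support (n : ℕ) (s : Finset κ) (hs : s.card ≤ 2 * n + 1)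
    (M : Matrix κ κ k) (hdiag : ∀ c, M c c = 0) (hswap : ∀ c d, M d c = -M c d)
    (hsupp : ∀ c ∉ s, ∀ d, M c d = 0) :
    ∃ u v : Fin n → κ → k, ∀ c d, M c d = ∑ l, (u l c * v l d - v l c * u l d) := by
  classical
  induction n generalizing s M with
  | zero =>
    refine ⟨0, 0, fun c d => ?_⟩
    rw [Finset.sum_of_isEmpty]
    by_cases hc : c ∈ s
    · by_cases hd : d ∈ s
      · rw [Finset.card_le_one.mp (by omega) c hc d hd, hdiag]
      · rw [← neg_neg (M c d), ← hswap, hsupp d hd, neg_zero]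
    · exact hsupp c hc d
  | succ n ih =>
    by_cases hM : ∀ c d, M c d = 0
    · exact ⟨0, 0, fun c d => by simp [hM]⟩
    push Not at hM
    obtain ⟨i, j, hij⟩ := hM
    have hi : i ∈ s := by_contra fun h => hij (hsupp i h j)
    have hj : j ∈ s := by_contra fun h => hij <| by
      rw [← neg_neg (M i j), ← hswap, hsupp j h, neg_zero]
    have hne : i ≠ j := by rintro rfl; exact hij (hdiag i)
    -- subtracting this wedge kills the rows and columns `i` and `j`
    let a : κ → k := fun c => M c i / M i j
    let b : κ → k := fun c => M c j
    obtain ⟨u, v, huv⟩ := ih ((s.erase i).erase j)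
      (by
        rw [Finset.card_erase_of_mem (by simp [hne.symm, hj]), Finset.card_erase_of_mem hi]
        omega)
      (of fun c d => M c d - (a c * b d - b c * a d))
      (fun c => by simp [hdiag]; ring) (fun c d => by simp [hswap c d]; ring)
      (fun c hc d => by
        simp only [Finset.mem_erase, not_and_or, not_not, ne_eq] at hc
        simp only [of_apply, a, b]
        rcases hc with rfl | rfl | hc
        · rw [hswap i c, hswap c d, hdiag]; field_simp; ring
        · rw [hdiag, hswap c d]; field_simp; ring
        · simp [hsupp c hc])
    refine ⟨Fin.cons a u, Fin.cons b v, fun c d => ?_⟩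
    rw [Fin.sum_univ_succ]
    simp only [Fin.cons_zero, Fin.cons_succ, ← huv, of_apply]
    ring
end Alternating

section Upper
variable {κ R : Type*} [LinearOrder κ] [CommRing R]

def altOfUpper (y : {q : κ × κ // q.1 < q.2} → R) : Matrix κ κ R :=
  of fun c d => if h : c < d then y ⟨(c, d), h⟩ else if h : d < c then -y ⟨(d, c), h⟩ else 0

lemma altOfUpper_apply_self (y : {q : κ × κ // q.1 < q.2} → R) (c : κ) :
    altOfUpper y c c = 0 := by
  simp [altOfUpper]

lemma altOfUpper_apply_swap (y : {q : κ × κ // q.1 < q.2} → R) (c d : κ) :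
    altOfUpper y d c = -altOfUpper y c d := by
  rcases lt_trichotomy c d with h | rfl | h
  · simp [altOfUpper, h, h.not_gt]
  · simp [altOfUpper]
  · simp [altOfUpper, h, h.not_gt]

lemma altOfUpper_map {S : Type*} [CommRing S] (ψ : R →+* S) (y : {q : κ × κ // q.1 < q.2} → R) :
    (altOfUpper y).map ψ = altOfUpper (ψ ∘ y) := by
  ext c d
  simp only [altOfUpper, map_apply, of_apply]
  split_ifs <;> simp

lemma altOfUpper_upper (M : Matrix κ κ R) (hdiag : ∀ c, M c c = 0)
    (hswap : ∀ c d, M d c = -M c d) : altOfUpper (fun q => M q.1.1 q.1.2) = M := by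
  ext c d
  rcases lt_trichotomy c d with h | rfl | h
  · simp [altOfUpper, h]
  · simp [altOfUpper, hdiag]
  · simp [altOfUpper, h, h.not_gt, ← hswap]

end Upper

lemma exists_gram_eq {ι κ k : Type*} [DecidableEq ι] [Fintype ι] [Fintype κ] [Field k]
    (hκ : Fintype.card κ ≤ 2 * Fintype.card ι + 1) (M : Matrix κ κ k)
    (hdiag : ∀ c, M c c = 0) (hswap : ∀ c d, M d c = -M c d) :
    ∃ A : Matrix (ι ⊕ ι) κ k, Aᵀ * symplecticForm ι k * A = M := by
  obtain ⟨u, v, huv⟩ := exists_sum_wedge_of_support (Fintype.card ι) Finset.univ (by simpa)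
    M hdiag hswap (by simp)
  let e := Fintype.equivFin ι
  refine ⟨of fun r c => Sum.elim (fun i => u (e i) c) (fun i => v (e i) c) r, ?_⟩
  ext c d
  rw [transpose_mul_symplecticForm_mul_apply, huv, ← e.sum_comp]
  rfl

section Fiber
variable {ι κ k : Type*} [DecidableEq ι] [Fintype ι] [Field k]

lemma isUnit_det_of_isUnit_det_gram {C : Matrix (ι ⊕ ι) (ι ⊕ ι) k}
    (h : IsUnit (Cᵀ * symplecticForm ι k * C).det) : IsUnit C.det := by
  rw [det_mul, det_mul, det_transpose] at h
  exact isUnit_of_mul_isUnit_left (isUnit_of_mul_isUnit_left h)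

lemma exists_symplectic_mul_eq_of_gram_eq (ε : ι ⊕ ι → κ) {A B : Matrix (ι ⊕ ι) κ k}
    (hAB : Bᵀ * symplecticForm ι k * B = Aᵀ * symplecticForm ι k * A)
    (hA : IsUnit ((Aᵀ * symplecticForm ι k * A).submatrix ε ε).det) :
    ∃ g : Matrix (ι ⊕ ι) (ι ⊕ ι) k,
      gᵀ * symplecticForm ι k * g = symplecticForm ι k ∧ g * A = B := by
  set Ω := symplecticForm ι k
  set A₁ := A.submatrix id ε
  set B₁ := B.submatrix id ε
  have hrows : B₁ᵀ * Ω * B = A₁ᵀ * Ω * A := by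
    simpa only [transpose_mul_mul_submatrix, submatrix_id_id] using
      congrArg (·.submatrix ε id) hAB
  have hsq : B₁ᵀ * Ω * B₁ = A₁ᵀ * Ω * A₁ := by
    simpa only [transpose_mul_mul_submatrix] using congrArg (·.submatrix ε ε) hAB
  rw [transpose_mul_mul_submatrix] at hA
  have hA₁ : IsUnit A₁.det := isUnit_det_of_isUnit_det_gram hA
  have hB₁ : IsUnit B₁.det := isUnit_det_of_isUnit_det_gram (hsq ▸ hA)
  refine ⟨B₁ * A₁⁻¹, ?_, ?_⟩
  · have hinvA₁ : (A₁⁻¹)ᵀ * A₁ᵀ = 1 := by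
      rw [← transpose_mul, mul_nonsing_inv _ hA₁, transpose_one]
    calc (B₁ * A₁⁻¹)ᵀ * Ω * (B₁ * A₁⁻¹) = (A₁⁻¹)ᵀ * (B₁ᵀ * Ω * B₁) * A₁⁻¹ := by
          simp only [transpose_mul, Matrix.mul_assoc]
      _ = ((A₁⁻¹)ᵀ * A₁ᵀ) * Ω * (A₁ * A₁⁻¹) := by rw [hsq]; simp only [Matrix.mul_assoc]
      _ = Ω := by rw [hinvA₁, mul_nonsing_inv _ hA₁, Matrix.one_mul, Matrix.mul_one]
  · have hunit : IsUnit (B₁ᵀ * Ω).det := by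
      rw [det_mul, det_transpose]
      exact hB₁.mul isUnit_det_symplecticForm
    rw [← nonsing_inv_mul_cancel_left _ (B₁ * A₁⁻¹ * A) hunit,
      ← nonsing_inv_mul_cancel_left _ B hunit]
    congr 1
    calc B₁ᵀ * Ω * (B₁ * A₁⁻¹ * A) = (B₁ᵀ * Ω * B₁) * A₁⁻¹ * A := by
          simp only [Matrix.mul_assoc]
      _ = A₁ᵀ * Ω * (A₁ * A₁⁻¹) * A := by rw [hsq]; simp only [Matrix.mul_assoc]
      _ = B₁ᵀ * Ω * B := by rw [mul_nonsing_inv _ hA₁, Matrix.mul_one, hrows]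

end Fiber

section Invariants
variable {ι κ μ R : Type*} [DecidableEq ι] [Fintype ι] [CommRing R]

def IsSymplecticInvariant (f : MvPolynomial ((ι ⊕ ι) × κ) R) : Prop :=
  ∀ g : Matrix (ι ⊕ ι) (ι ⊕ ι) R, gᵀ * symplecticForm ι R * g = symplecticForm ι R →
    ∀ A : Matrix (ι ⊕ ι) κ R, eval (fun p => (g * A) p.1 p.2) f = eval (fun p => A p.1 p.2) f

lemma IsSymplecticInvariant.rename {f : MvPolynomial ((ι ⊕ ι) × μ) R}
    (hf : IsSymplecticInvariant f) (e : μ → κ) :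
    IsSymplecticInvariant (rename (Prod.map id e) f) := by
  intro g hg A
  simp only [eval_rename]
  exact hf g hg (A.submatrix id e)

lemma IsSymplecticInvariant.eval_eq_of_gram_eq {k : Type*} [Field k]
    {f : MvPolynomial ((ι ⊕ ι) × κ) k} (hf : IsSymplecticInvariant f) (ε : ι ⊕ ι → κ)
    {A B : Matrix (ι ⊕ ι) κ k}
    (hAB : Bᵀ * symplecticForm ι k * B = Aᵀ * symplecticForm ι k * A)
    (hA : ((Aᵀ * symplecticForm ι k * A).submatrix ε ε).det ≠ 0) :
    eval (fun p => B p.1 p.2) f = eval (fun p => A p.1 p.2) f := by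
  obtain ⟨g, hg, rfl⟩ := exists_symplectic_mul_eq_of_gram_eq ε hAB (isUnit_iff_ne_zero.mpr hA)
  exact hf g hg A

end Invariants

lemma eval_bind₁ {σ τ R : Type*} [CommSemiring R] (v : τ → R) (g : σ → MvPolynomial τ R)
    (p : MvPolynomial σ R) : eval v (bind₁ g p) = eval (fun i => eval v (g i)) p :=
  eval₂Hom_bind₁ _ _ _ _

section Descent
variable {σ τ k : Type*} [Field k]

lemma bind₁_injective_of_surjective [Infinite k] {g : σ → MvPolynomial τ k}
    (hg : ∀ y : σ → k, ∃ v : τ → k, ∀ i, eval v (g i) = y i) :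
    Function.Injective (bind₁ g) := by
  intro p q h
  refine MvPolynomial.funext fun y => ?_
  obtain ⟨v, hv⟩ := hg y
  have := congrArg (eval v) h
  rwa [eval_bind₁, eval_bind₁, funext hv] at this

lemma dvd_of_eval_eq_zero [IsAlgClosed k] [Finite σ] {p r : MvPolynomial σ k} (hp : Prime p)
    (h : ∀ y, eval y p = 0 → eval y r = 0) : p ∣ r := by
  have : (Ideal.span {p}).IsPrime := (Ideal.span_singleton_prime hp.ne_zero).mpr hp
  rw [← Ideal.mem_span_singleton,
    ← IsPrime.vanishingIdeal_zeroLocus (K := k) (Ideal.span {p}), mem_vanishingIdeal_iff]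
  exact fun y hy => h y (hy p (Ideal.subset_span rfl))

lemma exists_eq_bind₁_of_mul_eq_bind₁ [IsAlgClosed k] [Finite σ] {g : σ → MvPolynomial τ k}
    (hg : ∀ y : σ → k, ∃ v : τ → k, ∀ i, eval v (g i) = y i) {f : MvPolynomial τ k}
    {r s : MvPolynomial σ k} (hs : s ≠ 0) (h : f * bind₁ g s = bind₁ g r) :
    ∃ p, f = bind₁ g p := by
  induction s using UniqueFactorizationMonoid.induction_on_prime generalizing r with
  | h₁ => exact absurd rfl hs
  | h₂ u hu =>
    obtain ⟨u', hu'⟩ := hu.exists_right_inv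
    refine ⟨r * u', ?_⟩
    rw [map_mul, ← h, mul_assoc, ← map_mul, hu', map_one, mul_one]
  | h₃ a q ha hq ih =>
    have hqr : q ∣ r := dvd_of_eval_eq_zero hq fun y hy => by
      obtain ⟨v, hv⟩ := hg y
      have := congrArg (eval v) h
      simp only [map_mul, eval_bind₁] at this
      rw [funext hv, hy] at this
      rw [← this, zero_mul, mul_zero]
    obtain ⟨r', rfl⟩ := hqr
    refine ih (r := r') ha (mul_left_cancel₀ (a := bind₁ g q) ?_ ?_)
    · exact fun h0 => hq.ne_zero (bind₁_injective_of_surjective hg (h0.trans (map_zero _).symm))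
    · rw [← map_mul, ← h, map_mul]; ring

lemma exists_eval_div_mul_pow_eq (f : MvPolynomial σ k) (N : σ → MvPolynomial τ k)
    (δ : MvPolynomial τ k) :
    ∃ (D : ℕ) (H : MvPolynomial τ k), ∀ y : τ → k, eval y δ ≠ 0 →
      eval (fun i => eval y (N i) / eval y δ) f * eval y δ ^ D = eval y H := by
  induction f using MvPolynomial.induction_on with
  | C a => exact ⟨0, C a, fun y _ => by simp⟩
  | add p q hp hq =>
    obtain ⟨D₁, H₁, h₁⟩ := hp
    obtain ⟨D₂, H₂, h₂⟩ := hq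
    refine ⟨D₁ + D₂, H₁ * δ ^ D₂ + H₂ * δ ^ D₁, fun y hy => ?_⟩
    simp only [map_add, map_mul, map_pow, ← h₁ y hy, ← h₂ y hy]
    ring
  | mul_X p i hp =>
    obtain ⟨D, H, h⟩ := hp
    refine ⟨D + 1, H * N i, fun y hy => ?_⟩
    simp only [map_mul, eval_X, ← h y hy]
    field_simp
    ring

end Descent

section Generic
variable (ι κ k : Type*) [DecidableEq ι] [Fintype ι] [Field k]

noncomputable def genericGram : Matrix κ κ (MvPolynomial ((ι ⊕ ι) × κ) k) :=
  (mvPolynomialX (ι ⊕ ι) κ k)ᵀ * symplecticForm ι (MvPolynomial ((ι ⊕ ι) × κ) k) *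
    mvPolynomialX (ι ⊕ ι) κ k

noncomputable def gramPullback [LinearOrder κ] :
    MvPolynomial {q : κ × κ // q.1 < q.2} k →ₐ[k] MvPolynomial ((ι ⊕ ι) × κ) k :=
  bind₁ fun q => genericGram ι κ k q.1.1 q.1.2

variable {ι κ k}

lemma genericGram_map_eval (A : Matrix (ι ⊕ ι) κ k) :
    (genericGram ι κ k).map (eval fun p => A p.1 p.2) = Aᵀ * symplecticForm ι k * A := by
  rw [genericGram, gram_map]
  congr <;> exact mvPolynomialX_map_eval₂ _ A

lemma det_genericGram_submatrix_ne_zero {ε : ι ⊕ ι → κ} (hε : Function.Injective ε) :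
    ((genericGram ι κ k).submatrix ε ε).det ≠ 0 := by
  classical
  intro h
  let A₀ : Matrix (ι ⊕ ι) κ k := (1 : Matrix κ κ k).submatrix ε id
  have := congrArg (eval fun e => A₀ e.1 e.2) h
  rw [RingHom.map_det, RingHom.mapMatrix_apply, ← submatrix_map, genericGram_map_eval,
    transpose_mul_mul_submatrix, submatrix_submatrix, Function.comp_id, Function.id_comp,
    submatrix_one ε hε, transpose_one, Matrix.one_mul, Matrix.mul_one, map_zero] at this
  exact isUnit_det_symplecticForm.ne_zero this

variable [LinearOrder κ]

lemma eval_gramPullback (A : Matrix (ι ⊕ ι) κ k) (p : MvPolynomial {q : κ × κ // q.1 < q.2} k) :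
    eval (fun e => A e.1 e.2) (gramPullback ι κ k p) =
      eval (fun q => (Aᵀ * symplecticForm ι k * A) q.1.1 q.1.2) p := by
  rw [gramPullback, eval_bind₁, ← genericGram_map_eval]
  rfl

lemma exists_eval_genericGram_eq [Fintype κ] (hκ : Fintype.card κ ≤ 2 * Fintype.card ι + 1)
    (y : {q : κ × κ // q.1 < q.2} → k) :
    ∃ v : (ι ⊕ ι) × κ → k, ∀ q, eval v (genericGram ι κ k q.1.1 q.1.2) = y q := by
  obtain ⟨A, hA⟩ := exists_gram_eq (ι := ι) hκ (altOfUpper y) (altOfUpper_apply_self y)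
    (altOfUpper_apply_swap y)
  refine ⟨fun e => A e.1 e.2, fun q => ?_⟩
  rw [← map_apply (f := eval _), genericGram_map_eval, hA, altOfUpper, of_apply, dif_pos q.2]

end Generic

section GenericFiber
variable {ι κ k : Type*} [DecidableEq ι] [Fintype ι] [LinearOrder κ] [Field k]

lemma gram_eval_div_eq_altOfUpper {δ : MvPolynomial {q : κ × κ // q.1 < q.2} k}
    {N : Matrix (ι ⊕ ι) κ (MvPolynomial {q : κ × κ // q.1 < q.2} k)}
    (hN : Nᵀ * symplecticForm ι (MvPolynomial {q : κ × κ // q.1 < q.2} k) * N =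
      δ ^ 2 • altOfUpper X)
    {y : {q : κ × κ // q.1 < q.2} → k} (hy : eval y δ ≠ 0) :
    (of fun r c => eval y (N r c) / eval y δ)ᵀ * symplecticForm ι k *
      (of fun r c => eval y (N r c) / eval y δ) = altOfUpper y := by
  have hB : (of fun r c => eval y (N r c) / eval y δ) = (eval y δ)⁻¹ • N.map (eval y) := by
    ext r c
    simp [div_eq_inv_mul]
  rw [hB, gram_smul, ← gram_map, hN, map_smul' _ _ _ (map_mul _), altOfUpper_map, map_pow,
    smul_smul, ← mul_pow, inv_mul_cancel₀ hy, one_pow, one_smul]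
  exact congrArg altOfUpper (funext fun q => eval_X q)

variable [Fintype κ]

lemma exists_gram_eq_smul_altOfUpper_X (hκ : Fintype.card κ ≤ 2 * Fintype.card ι + 1) :
    ∃ δ : MvPolynomial {q : κ × κ // q.1 < q.2} k, δ ≠ 0 ∧
      ∃ N : Matrix (ι ⊕ ι) κ (MvPolynomial {q : κ × κ // q.1 < q.2} k),
        Nᵀ * symplecticForm ι (MvPolynomial {q : κ × κ // q.1 < q.2} k) * N =
          δ ^ 2 • altOfUpper X := by
  let R := MvPolynomial {q : κ × κ // q.1 < q.2} k
  let F := FractionRing R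
  obtain ⟨A, hA⟩ := exists_gram_eq (ι := ι) hκ (altOfUpper fun q => algebraMap R F (X q))
    (altOfUpper_apply_self _) (altOfUpper_apply_swap _)
  obtain ⟨⟨δ, hδ⟩, hint⟩ := IsLocalization.exist_integer_multiples_of_finite
    (nonZeroDivisors R) fun e : (ι ⊕ ι) × κ => A e.1 e.2
  choose N hN using hint
  refine ⟨δ, nonZeroDivisors.ne_zero hδ, of fun r c => N (r, c), ?_⟩
  have hNA : (of fun r c => N (r, c)).map (algebraMap R F) = algebraMap R F δ • A := by
    ext r c
    exact (hN (r, c)).trans (Algebra.smul_def _ _)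
  apply Matrix.map_injective (IsFractionRing.injective R F)
  dsimp only
  rw [gram_map, hNA, gram_smul, hA, map_smul' _ _ _ (map_mul _), altOfUpper_map, map_pow]
  rfl

lemma IsSymplecticInvariant.exists_mul_gramPullback_eq [Infinite k]
    (hκ : Fintype.card κ ≤ 2 * Fintype.card ι + 1) {ε : ι ⊕ ι → κ} (hε : Function.Injective ε)
    {f : MvPolynomial ((ι ⊕ ι) × κ) k} (hf : IsSymplecticInvariant f) :
    ∃ r s, s ≠ 0 ∧ f * gramPullback ι κ k s = gramPullback ι κ k r := by
  obtain ⟨δ, hδ, N, hN⟩ := exists_gram_eq_smul_altOfUpper_X (ι := ι) (k := k) hκ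
  obtain ⟨D, H, hH⟩ := exists_eval_div_mul_pow_eq f (fun e => N e.1 e.2) δ
  refine ⟨H, δ ^ D, pow_ne_zero _ hδ, sub_eq_zero.mp ?_⟩
  -- the identity holds off the zero set of `δ` and of a `2n × 2n` minor of the Gram matrix
  have hd : gramPullback ι κ k δ * ((genericGram ι κ k).submatrix ε ε).det ≠ 0 :=
    mul_ne_zero ((map_ne_zero_iff _ (bind₁_injective_of_surjective
      (exists_eval_genericGram_eq hκ))).mpr hδ) (det_genericGram_submatrix_ne_zero hε)
  refine (mul_eq_zero.mp (MvPolynomial.funext fun v => ?_ :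
    (f * gramPullback ι κ k (δ ^ D) - gramPullback ι κ k H) *
      (gramPullback ι κ k δ * ((genericGram ι κ k).submatrix ε ε).det) = 0)).resolve_right hd
  obtain ⟨A, rfl⟩ : ∃ A : Matrix (ι ⊕ ι) κ k, (fun e => A e.1 e.2) = v :=
    ⟨of fun r c => v (r, c), rfl⟩
  simp only [map_zero, map_mul, map_sub, map_pow, eval_gramPullback]
  rw [RingHom.map_det, RingHom.mapMatrix_apply, ← submatrix_map, genericGram_map_eval]
  set y : {q : κ × κ // q.1 < q.2} → k := fun q => (Aᵀ * symplecticForm ι k * A) q.1.1 q.1.2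
  by_cases hδy : eval y δ = 0
  · simp [y, hδy]
  by_cases hdet : ((Aᵀ * symplecticForm ι k * A).submatrix ε ε).det = 0
  · simp [hdet]
  have hB := (gram_eval_div_eq_altOfUpper hN hδy).trans
    (altOfUpper_upper _ (gram_apply_self A) (gram_apply_swap A))
  rw [← hf.eval_eq_of_gram_eq ε hB hdet]
  exact mul_eq_zero_of_left (sub_eq_zero.mpr (hH y hδy)) _

end GenericFiber

section Main
variable {ι κ k : Type*} [DecidableEq ι] [Fintype ι] [Fintype κ] [LinearOrder κ] [Field k]
  [IsAlgClosed k]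

theorem IsSymplecticInvariant.exists_eq_gramPullback
    (hκ : Fintype.card κ = 2 * Fintype.card ι + 1) {f : MvPolynomial ((ι ⊕ ι) × κ) k}
    (hf : IsSymplecticInvariant f) : ∃ p, f = gramPullback ι κ k p := by
  obtain ⟨ε⟩ : Nonempty (ι ⊕ ι ↪ κ) :=
    Function.Embedding.nonempty_of_card_le (by rw [Fintype.card_sum]; omega)
  obtain ⟨r, s, hs, h⟩ := hf.exists_mul_gramPullback_eq hκ.le ε.injective
  exact exists_eq_bind₁_of_mul_eq_bind₁ (exists_eval_genericGram_eq hκ.le) hs h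

theorem IsSymplecticInvariant.exists_eval_eq_eval_gram {μ : Type*} (e : μ ↪ κ)
    (hκ : Fintype.card κ = 2 * Fintype.card ι + 1) {f : MvPolynomial ((ι ⊕ ι) × μ) k}
    (hf : IsSymplecticInvariant f) :
    ∃ p : MvPolynomial (μ × μ) k, ∀ A : Matrix (ι ⊕ ι) μ k,
      eval (fun q => A q.1 q.2) f = eval (fun q => (Aᵀ * symplecticForm ι k * A) q.1 q.2) p := by
  cases isEmpty_or_nonempty μ
  · refine ⟨C (eval 0 f), fun A => ?_⟩
    rw [eval_C]
    congr
    exact funext fun q => isEmptyElim q.2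
  obtain ⟨p, hp⟩ := (hf.rename e).exists_eq_gramPullback hκ
  let π := Function.invFun e
  refine ⟨MvPolynomial.rename (Prod.map π π) (MvPolynomial.rename Subtype.val p), fun A => ?_⟩
  have := congrArg (eval fun q => A.submatrix id π q.1 q.2) hp
  rw [eval_rename, eval_gramPullback] at this
  rw [eval_rename, eval_rename]
  convert this using 3
  · funext q
    simp [π, Function.leftInverse_invFun e.injective _]
  · rfl
end Main

theorem stmt7 (m n : ℕ) (hmn : m ≤ 2 * n + 1)
    (f : MvPolynomial ((Fin n ⊕ Fin n) × Fin m) ℂ)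
    (hinv : ∀ g : Matrix (Fin n ⊕ Fin n) (Fin n ⊕ Fin n) ℂ,
      gᵀ * (Matrix.fromBlocks (0 : Matrix (Fin n) (Fin n) ℂ) 1 (-1) 0) * g =
        Matrix.fromBlocks 0 1 (-1) 0 →
      ∀ A : Matrix (Fin n ⊕ Fin n) (Fin m) ℂ,
        MvPolynomial.eval (fun p => (g * A) p.1 p.2) f =
          MvPolynomial.eval (fun p => A p.1 p.2) f) :
    ∃ p : MvPolynomial (Fin m × Fin m) ℂ,
      ∀ A : Matrix (Fin n ⊕ Fin n) (Fin m) ℂ,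
        MvPolynomial.eval (fun q => A q.1 q.2) f =
          MvPolynomial.eval
            (fun q => (Aᵀ * (Matrix.fromBlocks (0 : Matrix (Fin n) (Fin n) ℂ) 1 (-1) 0 :
                Matrix (Fin n ⊕ Fin n) (Fin n ⊕ Fin n) ℂ) * A :
              Matrix (Fin m) (Fin m) ℂ) q.1 q.2) p :=
  IsSymplecticInvariant.exists_eval_eq_eval_gram (ι := Fin n) (Fin.castLEEmb hmn) (by simp) hinv
end

section
/- Let m = 2n+1 and let A : V_0 → V_1 be a regular odd nilpotent, i.e. of Jordan/ab-diagram type α_n given by a single chain a_1 → b_1 → a_2 → ... → b_{2n} → a_{2n+1} → 0 (so A and A* act by shifting along the chain). Then there exists a unique pair (F_0, F_1) of complete self-orthogonal flags such that A F_0^(i) ⊆ F_1^(i-1) for all i: necessarily F_0^(1) = span(a_{2n+1}), F_1^(1) = span(b_{2n}), and inductively each flag step is determined. -/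
/-!
Write `a.tailSpan i` for the span of the last `i` vectors of a basis `a` indexed by `Fin N`.
Because `A` shifts the chain basis of `V₀` onto that of `V₁` (killing the last vector) and `A*`
shifts it back one step further, `A⁻¹ (b.tailSpan i) = a.tailSpan (i + 1)` and
`A*⁻¹ (a.tailSpan i) = b.tailSpan i`. Hence the flag conditions force, by induction on `i`,
`F₀^(i) ≤ a.tailSpan i` and `F₁^(i) ≤ b.tailSpan i`, which are equalities by dimension count;
conversely the two tail flags satisfy all the conditions, isotropy coming from the
antidiagonal shape of both forms.
-/

open Submodule Module Finset

theorem LinearMap.apply_eq_zero_of_mem_span {R M N P : Type*} [CommSemiring R]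
    [AddCommMonoid M] [Module R M] [AddCommMonoid N] [Module R N] [AddCommMonoid P] [Module R P]
    (B : M →ₗ[R] N →ₗ[R] P) {s : Set M} {t : Set N} (h : ∀ x ∈ s, ∀ y ∈ t, B x y = 0)
    {v : M} {w : N} (hv : v ∈ span R s) (hw : w ∈ span R t) : B v w = 0 := by
  have ht : ∀ x ∈ s, span R t ≤ LinearMap.ker (B x) := fun x hx =>
    span_le.2 fun y hy => h x hx y hy
  have hs : span R s ≤ LinearMap.ker (B.flip w) := span_le.2 fun x hx => ht x hx hw
  exact hs hv

namespace Module.Basis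

section Semiring

variable {R M : Type*} [Semiring R] [AddCommMonoid M] [Module R M] {N : ℕ}
  (b : Basis (Fin N) R M)

def tailSpan (i : ℕ) : Submodule R M :=
  span R (b '' {j | N ≤ i + j})

theorem mem_tailSpan_iff {i : ℕ} {v : M} :
    v ∈ b.tailSpan i ↔ ∀ j : Fin N, i + j < N → b.repr v j = 0 := by
  rw [tailSpan, mem_span_image]
  refine forall_congr' fun j => ?_
  rw [Finset.mem_coe, Finsupp.mem_support_iff, Set.mem_ofPred_eq, ← not_le, not_imp_comm]

theorem tailSpan_mono : Monotone b.tailSpan := fun i i' h =>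
  span_mono <| Set.image_mono fun j (hj : N ≤ i + j) => show N ≤ i' + j by omega

theorem tailSpan_eq_top {i : ℕ} (h : N ≤ i) : b.tailSpan i = ⊤ := by
  have : {j : Fin N | N ≤ i + j} = Set.univ :=
    Set.eq_univ_of_forall fun j => show N ≤ i + j by omega
  rw [tailSpan, this, Set.image_univ, b.span_eq]

theorem tailSpan_one {j : Fin N} (hj : j + 1 = N) : b.tailSpan 1 = R ∙ b j := by
  have : {k : Fin N | N ≤ 1 + k} = {j} := by
    ext k
    simp only [Set.mem_ofPred_eq, Set.mem_singleton_iff, Fin.ext_iff]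
    omega
  rw [tailSpan, this, Set.image_singleton]

end Semiring

theorem apply_eq_zero_of_mem_tailSpan {R M P : Type*} [CommSemiring R] [AddCommMonoid M]
    [Module R M] [AddCommMonoid P] [Module R P] {N : ℕ} (b : Basis (Fin N) R M)
    (B : M →ₗ[R] M →ₗ[R] P) (hB : ∀ j k : Fin N, (j : ℕ) + k ≠ N - 1 → B (b j) (b k) = 0)
    {i : ℕ} {v w : M} (hv : v ∈ b.tailSpan i) (hw : w ∈ b.tailSpan (N - i)) : B v w = 0 :=
  B.apply_eq_zero_of_mem_span (by
    rintro _ ⟨j, hj : N ≤ i + j, rfl⟩ _ ⟨k, hk : N ≤ N - i + k, rfl⟩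
    exact hB j k (by omega)) hv hw

section DivisionRing

variable {K V : Type*} [DivisionRing K] [AddCommGroup V] [Module K V] {N : ℕ}
  (b : Basis (Fin N) K V)

theorem finrank_tailSpan {i : ℕ} (h : i ≤ N) : finrank K (b.tailSpan i) = i := by
  classical
  have hcard : #{j : Fin N | N ≤ i + j} = i :=
    calc #{j : Fin N | N ≤ i + j} = #{j : Fin N | (j : ℕ) < i} := by
          refine card_nbij' Fin.rev Fin.rev ?_ ?_ (fun j _ => j.rev_rev) (fun j _ => j.rev_rev) <;>
          · intro j hj
            simp only [coe_filter, mem_univ, true_and, Set.mem_ofPred_eq, Fin.val_rev] at hj ⊢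
            omega
      _ = i := by rw [Fin.card_filter_val_lt, min_eq_right h]
  have hli : LinearIndepOn K id (↑(image b {j : Fin N | N ≤ i + j}) : Set V) := by
    rw [coe_image]
    exact (b.linearIndependent.linearIndepOn _).id_image
  rw [tailSpan, ← coe_filter_univ, ← coe_image, finrank_span_finset_eq_card hli,
    card_image_of_injective _ b.injective, hcard]

theorem eq_tailSpan_of_le {F : ℕ → Submodule K V} (hrank : ∀ i ≤ N, finrank K (F i) = i)
    (htop : ∀ i, N ≤ i → F i = ⊤) (hle : ∀ i, F i ≤ b.tailSpan i) : F = b.tailSpan := by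
  have := b.finiteDimensional_of_finite
  funext i
  rcases le_total i N with h | h
  · exact eq_of_le_of_finrank_eq (hle i) (by rw [hrank i h, b.finrank_tailSpan h])
  · rw [htop i h, b.tailSpan_eq_top h]

end DivisionRing

section Shift
variable {R M M' : Type*} [Semiring R] [AddCommMonoid M] [Module R M] [AddCommMonoid M']
  [Module R M'] {N : ℕ} {a : Basis (Fin (N + 1)) R M} {b : Basis (Fin N) R M'}

theorem repr_apply_of_castSucc_shift {f : M →ₗ[R] M'} (hf : ∀ j, f (a j.castSucc) = b j)
    (hf_last : f (a (Fin.last N)) = 0) (v : M) (j : Fin N) :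
    b.repr (f v) j = a.repr v j.castSucc := by
  have : b.coord j ∘ₗ f = a.coord j.castSucc := a.ext fun k => by
    cases k using Fin.lastCases with
    | last => simp [hf_last, Fin.castSucc_ne_last]
    | cast k => simp [hf, Finsupp.single_apply]
  exact LinearMap.congr_fun this v

theorem comap_tailSpan_of_castSucc_shift {f : M →ₗ[R] M'} (hf : ∀ j, f (a j.castSucc) = b j)
    (hf_last : f (a (Fin.last N)) = 0) (i : ℕ) :
    (b.tailSpan i).comap f = a.tailSpan (i + 1) := by
  ext v
  simp only [mem_comap, mem_tailSpan_iff, repr_apply_of_castSucc_shift hf hf_last,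
    Fin.forall_fin_succ', Fin.val_castSucc, Fin.val_last]
  exact ⟨fun h => ⟨fun j hj => h j (by omega), fun hN => absurd hN (by omega)⟩,
    fun h j hj => h.1 j (by omega)⟩

theorem repr_apply_succ_of_succ_shift {g : M' →ₗ[R] M} (hg : ∀ j, g (b j) = a j.succ)
    (w : M') (j : Fin N) : a.repr (g w) j.succ = b.repr w j := by
  have : a.coord j.succ ∘ₗ g = b.coord j := b.ext fun k => by simp [hg, Finsupp.single_apply]
  exact LinearMap.congr_fun this w

theorem repr_apply_zero_of_succ_shift {g : M' →ₗ[R] M} (hg : ∀ j, g (b j) = a j.succ)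
    (w : M') : a.repr (g w) 0 = 0 := by
  have : a.coord 0 ∘ₗ g = 0 := b.ext fun k => by simp [hg, Fin.succ_ne_zero]
  exact LinearMap.congr_fun this w

theorem comap_tailSpan_of_succ_shift {g : M' →ₗ[R] M} (hg : ∀ j, g (b j) = a j.succ) (i : ℕ) :
    (a.tailSpan i).comap g = b.tailSpan i := by
  ext w
  simp only [mem_comap, mem_tailSpan_iff, Fin.forall_fin_succ, repr_apply_zero_of_succ_shift hg,
    repr_apply_succ_of_succ_shift hg, Fin.val_succ, implies_true, true_and]
  exact forall_congr' fun j => imp_congr_left (by omega)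

theorem le_tailSpan_of_map_le {f : M →ₗ[R] M'} (hf : ∀ j, f (a j.castSucc) = b j)
    (hf_last : f (a (Fin.last N)) = 0) {g : M' →ₗ[R] M} (hg : ∀ j, g (b j) = a j.succ)
    {F₀ : ℕ → Submodule R M} {F₁ : ℕ → Submodule R M'} (hF₀ : F₀ 0 = ⊥)
    (hF₀F₁ : ∀ i ≤ N, (F₀ (i + 1)).map f ≤ F₁ i) (hF₁F₀ : ∀ i, (F₁ i).map g ≤ F₀ i) (i : ℕ) :
    F₀ i ≤ a.tailSpan i ∧ F₁ i ≤ b.tailSpan i := by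
  have h₁ : ∀ i, F₀ i ≤ a.tailSpan i → F₁ i ≤ b.tailSpan i := fun i h =>
    (map_le_iff_le_comap.1 (hF₁F₀ i)).trans
      ((comap_mono h).trans (comap_tailSpan_of_succ_shift hg i).le)
  have h₀ : ∀ i, F₀ i ≤ a.tailSpan i := by
    intro i
    induction i with
    | zero => simp [hF₀]
    | succ i ih =>
      rcases le_or_gt i N with hi | hi
      · rw [← comap_tailSpan_of_castSucc_shift hf hf_last]
        exact (map_le_iff_le_comap.1 (hF₀F₁ i hi)).trans (comap_mono (h₁ i ih))
      · simp [a.tailSpan_eq_top (show N + 1 ≤ i + 1 by omega)]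
  exact ⟨h₀ i, h₁ i (h₀ i)⟩

end Shift

end Module.Basis

theorem stmt11 (n : ℕ) (hn : 0 < n) {V₀ V₁ : Type*}
    [AddCommGroup V₀] [Module ℂ V₀]
    [AddCommGroup V₁] [Module ℂ V₁]
    (B₀ : LinearMap.BilinForm ℂ V₀) (B₁ : LinearMap.BilinForm ℂ V₁)
    (A : V₀ →ₗ[ℂ] V₁) (Astar : V₁ →ₗ[ℂ] V₀)
    (a : Module.Basis (Fin (2 * n + 1)) ℂ V₀) (b : Module.Basis (Fin (2 * n)) ℂ V₁)
    (hchainA : ∀ i : Fin (2 * n), A (a i.castSucc) = b i)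
    (hchainA' : A (a (Fin.last (2 * n))) = 0)
    (hchainAstar : ∀ i : Fin (2 * n), Astar (b i) = a i.succ)
    (hpair₀ : ∀ i j : Fin (2 * n + 1), B₀ (a i) (a j) = 0 ↔ (i : ℕ) + (j : ℕ) ≠ 2 * n)
    (hpair₁ : ∀ i j : Fin (2 * n), B₁ (b i) (b j) = 0 ↔ (i : ℕ) + (j : ℕ) ≠ 2 * n - 1) :
    let P : ((ℕ → Submodule ℂ V₀) × (ℕ → Submodule ℂ V₁)) → Prop := fun FP =>
      Monotone FP.1 ∧ Monotone FP.2 ∧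
      (∀ i ≤ 2 * n + 1, Module.finrank ℂ (FP.1 i) = i) ∧
      (∀ i ≤ 2 * n, Module.finrank ℂ (FP.2 i) = i) ∧
      (∀ i, 2 * n + 1 ≤ i → FP.1 i = ⊤) ∧ (∀ i, 2 * n ≤ i → FP.2 i = ⊤) ∧
      (∀ i ≤ 2 * n + 1, ∀ v ∈ FP.1 i, ∀ w ∈ FP.1 (2 * n + 1 - i), B₀ v w = 0) ∧
      (∀ i ≤ 2 * n, ∀ v ∈ FP.2 i, ∀ w ∈ FP.2 (2 * n - i), B₁ v w = 0) ∧
      (∀ i, 1 ≤ i → i ≤ 2 * n + 1 → (FP.1 i).map A ≤ FP.2 (i - 1)) ∧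
      (∀ j, (FP.2 j).map Astar ≤ FP.1 j)
    (∃! FP, P FP) ∧
      ∀ FP, P FP →
        FP.1 1 = (ℂ ∙ a (Fin.last (2 * n))) ∧
        FP.2 1 = (ℂ ∙ b ⟨2 * n - 1, by omega⟩) := by
  intro P
  have hcomapA := Basis.comap_tailSpan_of_castSucc_shift hchainA hchainA'
  have hcomapAstar := Basis.comap_tailSpan_of_succ_shift hchainAstar
  have hexists : P (a.tailSpan, b.tailSpan) :=
    ⟨a.tailSpan_mono, b.tailSpan_mono, fun _ => a.finrank_tailSpan, fun _ => b.finrank_tailSpan,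
      fun _ => a.tailSpan_eq_top, fun _ => b.tailSpan_eq_top,
      fun _ _ _ hv _ hw => a.apply_eq_zero_of_mem_tailSpan B₀ (fun j k => (hpair₀ j k).2) hv hw,
      fun _ _ _ hv _ hw => b.apply_eq_zero_of_mem_tailSpan B₁ (fun j k => (hpair₁ j k).2) hv hw,
      fun i hi _ => map_le_iff_le_comap.2 (by rw [hcomapA, Nat.sub_add_cancel hi]),
      fun j => map_le_iff_le_comap.2 (hcomapAstar j).ge⟩
  have hunique : ∀ FP, P FP → FP = (a.tailSpan, b.tailSpan) := by
    rintro ⟨F₀, F₁⟩ ⟨-, -, hrank₀, hrank₁, htop₀, htop₁, -, -, hA, hAstar⟩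
    have := a.finiteDimensional_of_finite
    have hle := Basis.le_tailSpan_of_map_le hchainA hchainA' hchainAstar
      (Submodule.finrank_eq_zero.1 (hrank₀ 0 (Nat.zero_le _)))
      (fun i hi => hA (i + 1) (by omega) (by omega)) hAstar
    exact Prod.ext (a.eq_tailSpan_of_le hrank₀ htop₀ fun i => (hle i).1)
      (b.eq_tailSpan_of_le hrank₁ htop₁ fun i => (hle i).2)
  refine ⟨⟨_, hexists, hunique⟩, fun FP hFP => ?_⟩
  rw [hunique FP hFP]
  exact ⟨a.tailSpan_one (Fin.val_last _), b.tailSpan_one (Nat.sub_add_cancel (by omega))⟩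
end

section
/- Let m ≤ 2n and u = Σ_{i ≤ 2⌈m/2⌉ - 1} e_{m+1-i} ⊗ e_{i+1} ∈ V_0 ⊗ V_1 ≅ Hom(V_0, V_1). Then there exists a rational semisimple element h ∈ so(V_0) ⊕ sp(V_1), explicitly h = 2 diag(-2k, -2k+2, ..., 2k) ⊕ 2 diag(-2k-1, -2k+1, ..., 2k+1, 0, ..., 0) when m = 2k+1, such that h · u = 2u under the natural action of so(V_0) ⊕ sp(V_1) on V_0 ⊗ V_1. -/
/-!
Take both weight vectors affine in the coordinate index and vanishing at the centre of the
antidiagonal: `d₀ c = a (c - (m - 1)/2)` and `d₁ r = -a (r - (2n - 1)/2)`. The involution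
`i ↦ N - 1 - i` negates such a weight, so the diagonal matrices are skew for every form supported
on the antidiagonal, whatever its signs. On the support `r + c = m` of `u` the difference
`d₁ r - d₀ c` is the constant `a (2n - m - 2) / 2`, and since `2n - m - 2` is odd, `a` can be
chosen to make it `2`.
-/

open Matrix

namespace Matrix

variable {ι κ R : Type*} [Fintype ι] [DecidableEq ι] [Fintype κ] [DecidableEq κ] [CommRing R]

theorem diagonal_transpose_mul_add_mul_diagonal_eq_zero {B : Matrix ι ι R} {d : ι → R}
    (h : ∀ i j, B i j ≠ 0 → d i + d j = 0) : (diagonal d)ᵀ * B + B * diagonal d = 0 := by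
  ext i j
  by_cases hB : B i j = 0
  · simp [hB]
  · simp only [diagonal_transpose, diagonal_mul, mul_diagonal, add_apply, zero_apply]
    linear_combination B i j * h i j hB

theorem diagonal_mul_sub_mul_diagonal_eq_smul {u : Matrix κ ι R} {d₀ : ι → R} {d₁ : κ → R}
    {c : R} (h : ∀ r i, u r i ≠ 0 → d₁ r - d₀ i = c) :
    diagonal d₁ * u - u * diagonal d₀ = c • u := by
  ext r i
  by_cases hu : u r i = 0
  · simp [hu]
  · simp only [diagonal_mul, mul_diagonal, sub_apply, smul_apply, smul_eq_mul]
    linear_combination u r i * h r i hu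

end Matrix

def centeredWeight (N i : ℕ) : ℚ := i - ((N : ℚ) - 1) / 2

theorem centeredWeight_add_eq_zero {N i j : ℕ} (h : i + j + 1 = N) :
    centeredWeight N i + centeredWeight N j = 0 := by
  subst h
  simp only [centeredWeight]
  push_cast
  ring

theorem neg_mul_centeredWeight_sub_mul_centeredWeight (a : ℚ) (N : ℕ) {M r c : ℕ}
    (h : r + c = M) :
    -a * centeredWeight N r - a * centeredWeight M c = a * ((N : ℚ) - M - 2) / 2 := by
  subst h
  simp only [centeredWeight]
  push_cast
  ring

theorem stmt14_general (n k : ℕ) :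
    let m := 2 * k + 1
    let S : Matrix (Fin m) (Fin m) ℂ := fun i j => if (i : ℕ) + (j : ℕ) = m - 1 then 1 else 0
    let J : Matrix (Fin (2 * n)) (Fin (2 * n)) ℂ := fun i j =>
      if (i : ℕ) + (j : ℕ) = 2 * n - 1 then (if (i : ℕ) < n then 1 else -1) else 0
    let u : Matrix (Fin (2 * n)) (Fin m) ℂ := fun r c => if (r : ℕ) + (c : ℕ) = m then 1 else 0
    ∃ (d₀ : Fin m → ℚ) (d₁ : Fin (2 * n) → ℚ),
      let h₀ : Matrix (Fin m) (Fin m) ℂ := Matrix.diagonal fun i => (d₀ i : ℂ)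
      let h₁ : Matrix (Fin (2 * n)) (Fin (2 * n)) ℂ := Matrix.diagonal fun i => (d₁ i : ℂ)
      h₀ᵀ * S + S * h₀ = 0 ∧ h₁ᵀ * J + J * h₁ = 0 ∧ h₁ * u - u * h₀ = (2 : ℂ) • u := by
  intro m S J u
  have hodd : ((2 * n : ℕ) : ℚ) - m - 2 ≠ 0 := by
    have : ((2 * n : ℕ) : ℤ) - m - 2 ≠ 0 := by omega
    exact_mod_cast this
  set a : ℚ := 4 / (((2 * n : ℕ) : ℚ) - m - 2)
  refine ⟨fun c => a * centeredWeight m c, fun r => -a * centeredWeight (2 * n) r, ?_, ?_, ?_⟩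
  · refine diagonal_transpose_mul_add_mul_diagonal_eq_zero fun i j hij => ?_
    have hsum : (i : ℕ) + j + 1 = m := by
      by_contra h
      exact hij (if_neg (by omega))
    exact_mod_cast (by rw [← mul_add, centeredWeight_add_eq_zero hsum, mul_zero] :
      a * centeredWeight m i + a * centeredWeight m j = 0)
  · refine diagonal_transpose_mul_add_mul_diagonal_eq_zero fun i j hij => ?_
    have hsum : (i : ℕ) + j + 1 = 2 * n := by
      by_contra h
      exact hij (if_neg (by omega))
    exact_mod_cast (by rw [← mul_add, centeredWeight_add_eq_zero hsum, mul_zero] :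
      -a * centeredWeight (2 * n) i + -a * centeredWeight (2 * n) j = 0)
  · refine diagonal_mul_sub_mul_diagonal_eq_smul fun r c hrc => ?_
    have hsum : (r : ℕ) + c = m := by
      by_contra h
      exact hrc (if_neg h)
    have := neg_mul_centeredWeight_sub_mul_centeredWeight a (2 * n) hsum
    rw [show a * (((2 * n : ℕ) : ℚ) - m - 2) = 4 from div_mul_cancel₀ 4 hodd] at this
    exact_mod_cast this.trans (by norm_num)

theorem stmt14 (n k : ℕ) (hm : 2 * k + 1 ≤ 2 * n) :
    let m := 2 * k + 1
    let S : Matrix (Fin m) (Fin m) ℂ := fun i j => if (i : ℕ) + (j : ℕ) = m - 1 then 1 else 0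
    let J : Matrix (Fin (2 * n)) (Fin (2 * n)) ℂ := fun i j =>
      if (i : ℕ) + (j : ℕ) = 2 * n - 1 then (if (i : ℕ) < n then 1 else -1) else 0
    let u : Matrix (Fin (2 * n)) (Fin m) ℂ := fun r c => if (r : ℕ) + (c : ℕ) = m then 1 else 0
    ∃ (d₀ : Fin m → ℚ) (d₁ : Fin (2 * n) → ℚ),
      let h₀ : Matrix (Fin m) (Fin m) ℂ := Matrix.diagonal fun i => (d₀ i : ℂ)
      let h₁ : Matrix (Fin (2 * n)) (Fin (2 * n)) ℂ := Matrix.diagonal fun i => (d₁ i : ℂ)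
      h₀ᵀ * S + S * h₀ = 0 ∧ h₁ᵀ * J + J * h₁ = 0 ∧ h₁ * u - u * h₀ = (2 : ℂ) • u :=
  stmt14_general n k
end
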